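/- arXiv:2201.04814 — 2 statements merged into one kernel-verified Lean document; each statement's English description precedes it below -/
import Mathlib

section
/- Let $\gamma, \lambda \in (0,1)$, $H > 1$, and $T \in (0,\infty)$. Suppose $g : [0,\infty) \to \mathbb{R}$ is a nonnegative continuous function satisfying $|g(t) - g(s)| \leq H|t-s|^{\gamma}$ for all $t,s \in (0,\infty)$, and $g(0) = 0$. Then $\left( \int_0^T g(t)\,dt \right)^{\frac{\gamma\lambda+1}{\gamma+1}} \leq N \cdot H^{1/\gamma} \int_0^T (g(t))^{\lambda}\,dt$, where $N$ is a constant depending only on $\gamma$ and $\lambda$. -/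
open MeasureTheory

theorem stmt0 (γ lam : ℝ) (hγ : γ ∈ Set.Ioo (0:ℝ) 1) (hlam : lam ∈ Set.Ioo (0:ℝ) 1) :
    ∃ N : ℝ, 0 < N ∧ ∀ (H T : ℝ) (g : ℝ → ℝ), 1 < H → 0 < T →
      ContinuousOn g (Set.Ici 0) → (∀ t ∈ Set.Ici (0:ℝ), 0 ≤ g t) →
      (∀ t s : ℝ, 0 < t → 0 < s → |g t - g s| ≤ H * |t - s| ^ γ) →
      g 0 = 0 →
      (∫ t in (0:ℝ)..T, g t) ^ ((γ * lam + 1) / (γ + 1)) ≤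
        N * H ^ (1/γ) * ∫ t in (0:ℝ)..T, (g t) ^ lam := by
  obtain ⟨hγ0, hγ1⟩ := hγ
  obtain ⟨hl0, hl1⟩ := hlam
  set θ : ℝ := γ * (1 - lam) / (γ + 1) with hθdef
  set α : ℝ := (γ * lam + 1) / (γ + 1) with hαdef
  have hγ1' : (0:ℝ) < γ + 1 := by linarith
  have hθ0 : 0 < θ := div_pos (by nlinarith) hγ1'
  have hα0 : 0 < α := div_pos (by nlinarith) hγ1'
  have hθα : θ + α = 1 := by rw [hθdef, hαdef]; field_simp; ring
  refine ⟨(2 ^ (lam + 1/γ)) ^ θ, by positivity, ?_⟩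
  intro H T g hH hT hgc hgnn hHol hg00
  set N : ℝ := (2 ^ (lam + 1/γ) : ℝ) ^ θ with hNdef
  have hN0 : 0 < N := by positivity
  have hH0 : (0:ℝ) < H := by linarith
  have hsub : Set.Icc (0:ℝ) T ⊆ Set.Ici 0 := fun x hx => hx.1
  have hgcT : ContinuousOn g (Set.Icc 0 T) := hgc.mono hsub
  have hIg : IntervalIntegrable g volume 0 T :=
    ContinuousOn.intervalIntegrable (by rw [Set.uIcc_of_le hT.le]; exact hgcT)
  have hglc : ContinuousOn (fun t => g t ^ lam) (Set.Icc 0 T) := fun x hx =>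
    (Real.continuousAt_rpow_const _ _ (Or.inr hl0.le)).comp_continuousWithinAt (hgcT x hx)
  have hIgl : IntervalIntegrable (fun t => g t ^ lam) volume 0 T :=
    ContinuousOn.intervalIntegrable (by rw [Set.uIcc_of_le hT.le]; exact hglc)
  -- the maximum
  obtain ⟨t0, ht0mem, ht0max⟩ :=
    isCompact_Icc.exists_isMaxOn (Set.nonempty_Icc.mpr hT.le) hgcT
  set M := g t0 with hMdef
  have hM0 : 0 ≤ M := hgnn t0 ht0mem.1
  have hgleM : ∀ x ∈ Set.Icc (0:ℝ) T, g x ≤ M := fun x hx => ht0max hx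
  -- pointwise Hölder bound from 0
  have key : ∀ t : ℝ, 0 ≤ t → g t ≤ H * t ^ γ := by
    intro t ht
    rcases ht.eq_or_lt with h0 | h0
    · rw [← h0, hg00, Real.zero_rpow hγ0.ne', mul_zero]
    · have hcont : ContinuousAt (fun s : ℝ => H * |t - s| ^ γ) 0 := by
        apply ContinuousAt.mul continuousAt_const
        apply ContinuousAt.comp
          (Real.continuousAt_rpow_const _ _ (Or.inl (by simp [abs_of_pos h0, h0.ne'])))
        exact ((continuous_const.sub continuous_id).abs).continuousAt
      have hg0lim : Filter.Tendsto g (nhdsWithin 0 (Set.Ioi 0)) (nhds 0) := by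
        have := (hgc 0 (le_refl (0:ℝ))).tendsto
        rw [hg00] at this
        exact this.mono_left (nhdsWithin_mono 0 Set.Ioi_subset_Ici_self)
      have hlim : Filter.Tendsto (fun s => g s + H * |t - s| ^ γ)
          (nhdsWithin 0 (Set.Ioi 0)) (nhds (0 + H * |t - 0| ^ γ)) :=
        hg0lim.add (hcont.tendsto.mono_left nhdsWithin_le_nhds)
      have hev : ∀ᶠ s in nhdsWithin 0 (Set.Ioi 0), g t ≤ g s + H * |t - s| ^ γ := by
        filter_upwards [self_mem_nhdsWithin] with s hs
        have h1 := hHol t s h0 hs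
        have h2 := abs_le.mp h1
        linarith [h2.1, h2.2]
      have := ge_of_tendsto hlim hev
      rwa [sub_zero, zero_add, abs_of_pos h0] at this
  -- trivial case M = 0
  rcases hM0.eq_or_lt with hM | hM
  · have hz : ∀ x ∈ Set.uIcc (0:ℝ) T, g x = 0 := by
      intro x hx
      rw [Set.uIcc_of_le hT.le] at hx
      exact le_antisymm (by rw [hM]; exact hgleM x hx) (hgnn x hx.1)
    have hz2 : ∀ x ∈ Set.uIcc (0:ℝ) T, g x ^ lam = (0:ℝ) := by
      intro x hx; rw [hz x hx, Real.zero_rpow hl0.ne']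
    rw [intervalIntegral.integral_congr hz, intervalIntegral.integral_congr hz2]
    simp [Real.zero_rpow hα0.ne']
  -- main case
  set δ : ℝ := (M / (2*H)) ^ (1/γ) with hδdef
  have hδpos : 0 < δ := Real.rpow_pos_of_pos (by positivity) _
  have hδγ : δ ^ γ = M / (2*H) := by
    rw [hδdef, ← Real.rpow_mul (by positivity), one_div, inv_mul_cancel₀ hγ0.ne',
      Real.rpow_one]
  have ht0pos : δ < t0 := by
    by_contra hcon
    push_neg at hcon
    have h1 : t0 ^ γ ≤ δ ^ γ := Real.rpow_le_rpow ht0mem.1 hcon hγ0.le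
    have h2 := key t0 ht0mem.1
    rw [hδγ] at h1
    rw [div_mul_eq_div_div] at h1
    have h3 : H * t0 ^ γ ≤ H * (M / H / 2) := by
      apply mul_le_mul_of_nonneg_left _ hH0.le
      calc t0 ^ γ ≤ M / 2 / H := h1
        _ = M / H / 2 := by ring
    have h4 : H * (M / H / 2) = M / 2 := by field_simp
    rw [hMdef] at hM
    linarith
  have ht00 : 0 < t0 := hδpos.trans ht0pos
  -- lower bound on g near t0
  have hnear : ∀ s ∈ Set.Icc (t0 - δ) t0, M / 2 ≤ g s := by
    intro s hs
    have hs0 : 0 < s := lt_of_lt_of_le (by linarith) hs.1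
    have h1 := (abs_le.mp (hHol t0 s ht00 hs0)).2
    have habs : |t0 - s| ≤ δ := by
      rw [abs_of_nonneg (by linarith [hs.2])]; linarith [hs.1]
    have h2 : H * |t0 - s| ^ γ ≤ H * δ ^ γ :=
      mul_le_mul_of_nonneg_left (Real.rpow_le_rpow (abs_nonneg _) habs hγ0.le) hH0.le
    rw [hδγ] at h2
    have h3 : H * (M / (2*H)) = M / 2 := by field_simp
    rw [h3] at h2
    have := hMdef
    linarith
  set B : ℝ := ∫ t in (0:ℝ)..T, g t ^ lam with hBdef
  set A : ℝ := ∫ t in (0:ℝ)..T, g t with hAdef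
  have hA0 : 0 ≤ A :=
    intervalIntegral.integral_nonneg hT.le (fun x hx => hgnn x hx.1)
  -- first lower bound: B ≥ (M/2)^lam * δ
  have hB1 : (M/2) ^ lam * δ ≤ B := by
    have hab : t0 - δ ≤ t0 := by linarith
    have hsub2 : Set.uIcc (t0 - δ) t0 ⊆ Set.uIcc (0:ℝ) T := by
      rw [Set.uIcc_of_le hab, Set.uIcc_of_le hT.le]
      exact Set.Icc_subset_Icc (by linarith) ht0mem.2
    have hint : IntervalIntegrable (fun t => g t ^ lam) volume (t0 - δ) t0 :=
      hIgl.mono_set hsub2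
    have h1 : ∫ _ in (t0 - δ)..t0, (M/2) ^ lam ≤ ∫ t in (t0 - δ)..t0, g t ^ lam := by
      apply intervalIntegral.integral_mono_on hab intervalIntegrable_const hint
      intro x hx
      exact Real.rpow_le_rpow (by positivity) (hnear x hx) hl0.le
    have h2 : ∫ t in (t0 - δ)..t0, g t ^ lam ≤ B := by
      apply intervalIntegral.integral_mono_interval (by linarith) hab ht0mem.2 _ hIgl
      apply ae_restrict_of_forall_mem measurableSet_Ioc
      intro x hx
      exact Real.rpow_nonneg (hgnn x hx.1.le) _
    rw [intervalIntegral.integral_const, smul_eq_mul, sub_sub_cancel] at h1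
    linarith [mul_comm δ ((M/2)^lam)]
  have hB0 : 0 < B := lt_of_lt_of_le (by positivity) hB1
  -- second lower bound: B ≥ M^(lam-1) * A
  have hB2 : M ^ (lam - 1) * A ≤ B := by
    have h1 : ∫ t in (0:ℝ)..T, M ^ (lam - 1) * g t ≤ B := by
      apply intervalIntegral.integral_mono_on hT.le (hIg.const_mul _) hIgl
      intro x hx
      rcases (hgnn x hx.1).eq_or_lt with h0 | h0
      · rw [← h0, mul_zero]
        exact Real.rpow_nonneg (le_refl 0) _
      · have e1 : g x ^ lam = g x ^ (lam - 1) * g x := by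
          rw [← Real.rpow_add_one h0.ne', sub_add_cancel]
        rw [e1]
        exact mul_le_mul_of_nonneg_right
          (Real.rpow_le_rpow_of_nonpos h0 (hgleM x hx) (by linarith)) h0.le
    rwa [intervalIntegral.integral_const_mul] at h1
  -- if A = 0 we are done
  rcases hA0.eq_or_lt with hA | hA
  · rw [← hA, Real.zero_rpow hα0.ne']
    positivity
  -- combine
  have hc1 : 0 < (M/2) ^ lam * δ := by positivity
  have hc2 : 0 < M ^ (lam - 1) * A := by positivity
  have hcomb : ((M/2) ^ lam * δ) ^ θ * (M ^ (lam - 1) * A) ^ α ≤ B := by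
    calc ((M/2) ^ lam * δ) ^ θ * (M ^ (lam - 1) * A) ^ α
        ≤ B ^ θ * B ^ α :=
          mul_le_mul (Real.rpow_le_rpow hc1.le hB1 hθ0.le)
            (Real.rpow_le_rpow hc2.le hB2 hα0.le)
            (Real.rpow_nonneg hc2.le _) (Real.rpow_nonneg hB0.le _)
      _ = B := by rw [← Real.rpow_add hB0, hθα, Real.rpow_one]
  -- the key identity via logs
  have hkey : N * H ^ (1/γ) * (((M/2) ^ lam * δ) ^ θ * (M ^ (lam - 1) * A) ^ α)
      = H ^ (α/γ) * A ^ α := by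
    have hM2 : (0:ℝ) < M / 2 := by linarith
    have h2H : (0:ℝ) < M / (2*H) := by positivity
    apply Real.log_injOn_pos (Set.mem_Ioi.mpr (by positivity)) (Set.mem_Ioi.mpr (by positivity))
    rw [Real.log_mul (by positivity) (by positivity),
      Real.log_mul (by positivity) (by positivity),
      Real.log_mul (by positivity) (by positivity),
      Real.log_mul (by positivity) (by positivity),
      hNdef, Real.log_rpow (by positivity), Real.log_rpow (by positivity),
      Real.log_rpow hH0, Real.log_rpow hH0,
      Real.log_rpow hc1, Real.log_rpow hc2, Real.log_rpow hA,
      Real.log_mul (by positivity) hδpos.ne',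
      Real.log_mul (by positivity) hA.ne',
      Real.log_rpow hM2, Real.log_rpow hM, hδdef, Real.log_rpow h2H,
      Real.log_div hM.ne' (two_ne_zero : (2:ℝ) ≠ 0),
      Real.log_div hM.ne' (mul_pos two_pos hH0).ne',
      Real.log_mul (two_ne_zero : (2:ℝ) ≠ 0) hH0.ne', hθdef, hαdef]
    field_simp
    ring
  calc A ^ α ≤ H ^ (α/γ) * A ^ α := by
        nlinarith [Real.one_le_rpow hH.le (by positivity : (0:ℝ) ≤ α/γ),
          Real.rpow_nonneg hA0 α]
    _ = N * H ^ (1/γ) * (((M/2) ^ lam * δ) ^ θ * (M ^ (lam - 1) * A) ^ α) := hkey.symm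
    _ ≤ N * H ^ (1/γ) * B := by
        apply mul_le_mul_of_nonneg_left hcomb (by positivity)
end

section
/- Let $\gamma \in (0,1)$, $\lambda \in (0,1)$, $d \geq 1$, $H > 1$. Suppose $g : \mathbb{R}^d \to \mathbb{R}$ is a bounded, nonnegative, continuous function with $g(x) \leq H$ and $|g(x) - g(y)| \leq H|x - y|^{\gamma}$ for all $x, y$. Suppose further that over an annulus $A = \{x : R + ar < |x| < R + br\}$ (with $0 \leq a < b$, $R > 1$, $r > 0$) we have $\int_A g(x)\,dx = 1$ and $\sup_{x \in A} g(x) \geq 1$. Then $\int_A (g(x))^{\lambda}\,dx \geq N(\lambda, d) \left( (4H)^{-1/\gamma} \wedge (b-a)r \right)^d$ for some constant $N(\lambda, d) > 0$. -/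
/-!
Pick `x₀` in the annulus with `g x₀ > 1/2`. The Hölder bound moves `g` by at most `1/4` on the
ball of radius `ρ = (4H)^(-1/γ)` around `x₀`, so `g ≥ 1/4` there. Shifting `x₀` radially by
`δ/4`, where `δ = min ρ ((b-a)r)`, gives a ball of radius `δ/4` inside both the annulus and that
ball; integrating `g^λ ≥ 4^(-λ)` over it yields the bound with `N = 4^(-λ) |B₁| / 4^d`.
-/

open MeasureTheory Metric

theorem ball_subset_norm_preimage_Ioo {E : Type*} [SeminormedAddCommGroup E] {α β r : ℝ} {y : E}
    (hα : α + r ≤ ‖y‖) (hβ : ‖y‖ + r ≤ β) : ball y r ⊆ (‖·‖) ⁻¹' Set.Ioo α β := by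
  intro z hz
  have := abs_sub_lt_iff.1 ((abs_norm_sub_norm_le z y).trans_lt (mem_ball_iff_norm.1 hz))
  constructor <;> linarith

section Annulus

variable {E : Type*} [NormedAddCommGroup E] [NormedSpace ℝ E]

theorem exists_norm_eq_add_norm_sub_eq_abs {x : E} (hx : x ≠ 0) {s : ℝ} (hs : -‖x‖ ≤ s) :
    ∃ y : E, ‖y‖ = ‖x‖ + s ∧ ‖y - x‖ = |s| := by
  have hx' : 0 < ‖x‖ := norm_pos_iff.2 hx
  refine ⟨(1 + s / ‖x‖) • x, ?_, ?_⟩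
  · rw [norm_smul, Real.norm_of_nonneg
      (by rw [← div_self hx'.ne', ← add_div]; exact div_nonneg (by linarith) hx'.le)]
    field_simp
  · rw [add_smul, one_smul, add_sub_cancel_left, norm_smul, Real.norm_eq_abs, abs_div,
      abs_norm, div_mul_cancel₀ _ hx'.ne']

theorem exists_ball_subset_ball_inter_norm_preimage_Ioo {α β δ : ℝ} {x : E} (hα : 0 ≤ α)
    (hx : ‖x‖ ∈ Set.Ioo α β) (hδ : 0 < δ) (hδβ : δ ≤ β - α) :
    ∃ y, ball y (δ / 4) ⊆ ball x (δ / 2) ∩ (‖·‖) ⁻¹' Set.Ioo α β := by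
  have hx0 : x ≠ 0 := norm_pos_iff.1 (hα.trans_lt hx.1)
  obtain ⟨y, hyx, hy⟩ : ∃ y : E, ‖y - x‖ ≤ δ / 4 ∧ α + δ / 4 ≤ ‖y‖ ∧ ‖y‖ + δ / 4 ≤ β := by
    rcases lt_or_ge (‖x‖ + δ / 2) β with hup | hdown
    · obtain ⟨y, hy, hyx⟩ := exists_norm_eq_add_norm_sub_eq_abs hx0 (s := δ / 4)
        (by linarith [norm_nonneg x])
      exact ⟨y, by rw [hyx, abs_of_pos (by positivity)], by linarith [hx.1], by linarith⟩
    · obtain ⟨y, hy, hyx⟩ := exists_norm_eq_add_norm_sub_eq_abs hx0 (s := -(δ / 4))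
        (by linarith)
      exact ⟨y, by rw [hyx, abs_neg, abs_of_pos (by positivity)], by linarith, by linarith [hx.2]⟩
  refine ⟨y, fun z hz => ⟨?_, ball_subset_norm_preimage_Ioo hy.1 hy.2 hz⟩⟩
  rw [mem_ball_iff_norm] at hz ⊢
  linarith [norm_sub_le_norm_sub_add_norm_sub z y x]

end Annulus

theorem sub_le_of_abs_sub_le_mul_rpow {X : Type*} [SeminormedAddCommGroup X] {g : X → ℝ}
    {H γ ρ ε : ℝ} (hH : 0 ≤ H) (hγ : 0 ≤ γ) (hg : ∀ x y, |g x - g y| ≤ H * ‖x - y‖ ^ γ)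
    (hρ : H * ρ ^ γ ≤ ε) {x z : X} (hz : ‖z - x‖ ≤ ρ) : g x - ε ≤ g z := by
  have := (le_abs_self _).trans (hg x z)
  have : ‖x - z‖ ^ γ ≤ ρ ^ γ := Real.rpow_le_rpow (norm_nonneg _) (norm_sub_rev x z ▸ hz) hγ
  nlinarith

theorem rpow_neg_one_div_rpow {c γ : ℝ} (hc : 0 ≤ c) (hγ : γ ≠ 0) :
    (c ^ (-(1 / γ))) ^ γ = c⁻¹ := by
  rw [← Real.rpow_mul hc, neg_mul, one_div_mul_cancel hγ, Real.rpow_neg_one]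

theorem mul_measureReal_le_setIntegral {X : Type*} [MeasurableSpace X] {μ : Measure X}
    {f : X → ℝ} {s t : Set X} {c : ℝ} (hs : MeasurableSet s) (hμs : μ s ≠ ⊤) (hst : s ⊆ t)
    (hc : ∀ x ∈ s, c ≤ f x) (hf : 0 ≤ f) (hft : IntegrableOn f t μ) :
    c * μ.real s ≤ ∫ x in t, f x ∂μ :=
  (setIntegral_ge_of_const_le_real hs hμs hc (hft.mono_set hst)).trans
    (setIntegral_mono_set hft (.of_forall hf) hst.eventuallyLE)

theorem stmt6_general (lam : ℝ) (hlam : lam ∈ Set.Ioo (0:ℝ) 1) (d : ℕ) :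
    ∃ N : ℝ, 0 < N ∧
      ∀ (γ H R a b r : ℝ) (g : EuclideanSpace ℝ (Fin d) → ℝ),
        γ ∈ Set.Ioo (0:ℝ) 1 → 1 < H → 1 < R → 0 ≤ a → a < b → 0 < r →
        Continuous g → (∀ x, 0 ≤ g x) → (∀ x, g x ≤ H) →
        (∀ x y, |g x - g y| ≤ H * ‖x - y‖ ^ γ) →
        (∫ x in {x : EuclideanSpace ℝ (Fin d) | R + a*r < ‖x‖ ∧ ‖x‖ < R + b*r}, g x) = 1 →
        1 ≤ sSup (g '' {x : EuclideanSpace ℝ (Fin d) | R + a*r < ‖x‖ ∧ ‖x‖ < R + b*r}) →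
        N * (min ((4*H) ^ (-(1/γ))) ((b-a)*r)) ^ d ≤
          ∫ x in {x : EuclideanSpace ℝ (Fin d) | R + a*r < ‖x‖ ∧ ‖x‖ < R + b*r},
            (g x) ^ lam := by
  set c := volume.real (ball (0 : EuclideanSpace ℝ (Fin d)) 1)
  have hc : 0 < c := ENNReal.toReal_pos (measure_ball_pos volume _ one_pos).ne'
    measure_ball_lt_top.ne
  refine ⟨(1 / 4) ^ lam * c / 4 ^ d, by positivity, ?_⟩
  intro γ H R a b r g hγ hH hR ha hab hr hg hg0 _ hHol _ hsup
  set A := {x : EuclideanSpace ℝ (Fin d) | R + a*r < ‖x‖ ∧ ‖x‖ < R + b*r}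
  -- `sSup ∅ = 0` in `ℝ`, so `hsup` forces the annulus to be nonempty
  have hne : (g '' A).Nonempty := Set.nonempty_iff_ne_empty.2 fun h => by
    rw [h, Real.sSup_empty] at hsup; linarith
  obtain ⟨_, ⟨x₀, hx₀, rfl⟩, hgx₀⟩ := exists_lt_of_lt_csSup hne (by linarith : (1:ℝ) / 2 < _)
  set δ := min ((4*H) ^ (-(1/γ))) ((b-a)*r)
  have hδ : 0 < δ := lt_min (by positivity) (by nlinarith)
  obtain ⟨y, hy⟩ := exists_ball_subset_ball_inter_norm_preimage_Ioo (by positivity) hx₀ hδ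
    ((min_le_right _ _).trans_eq (by ring))
  have hgy : ∀ z ∈ ball y (δ / 4), (1 / 4) ^ lam ≤ g z ^ lam := fun z hz => by
    have hρ : H * ((4*H) ^ (-(1/γ))) ^ γ = 1 / 4 := by
      rw [rpow_neg_one_div_rpow (by positivity) hγ.1.ne']; field_simp
    have hzx : ‖z - x₀‖ ≤ (4*H) ^ (-(1/γ)) := by
      linarith [mem_ball_iff_norm.1 (hy hz).1, min_le_left ((4*H) ^ (-(1/γ))) ((b-a)*r)]
    have := sub_le_of_abs_sub_le_mul_rpow (by positivity) hγ.1.le hHol hρ.le hzx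
    exact Real.rpow_le_rpow (by norm_num) (by linarith) hlam.1.le
  have hint : IntegrableOn (fun x => g x ^ lam) A :=
    ((hg.rpow_const fun _ => .inr hlam.1.le).continuousOn.integrableOn_compact
      (isCompact_closedBall 0 (R + b*r))).mono_set fun x hx => mem_closedBall_zero_iff.2 hx.2.le
  calc (1 / 4) ^ lam * c / 4 ^ d * δ ^ d
      = (1 / 4) ^ lam * volume.real (ball y (δ / 4)) := by
        simp only [c, measureReal_def]
        rw [Measure.addHaar_ball_of_pos _ y (by positivity : 0 < δ / 4),
          finrank_euclideanSpace_fin, ENNReal.toReal_mul, ENNReal.toReal_ofReal (by positivity),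
          div_pow]
        ring
    _ ≤ ∫ x in A, g x ^ lam :=
        mul_measureReal_le_setIntegral measurableSet_ball measure_ball_lt_top.ne
          (fun z hz => (hy hz).2) hgy (fun x => Real.rpow_nonneg (hg0 x) _) hint

theorem stmt6 (lam : ℝ) (hlam : lam ∈ Set.Ioo (0:ℝ) 1) (d : ℕ) (hd : 1 ≤ d) :
    ∃ N : ℝ, 0 < N ∧
      ∀ (γ H R a b r : ℝ) (g : EuclideanSpace ℝ (Fin d) → ℝ),
        γ ∈ Set.Ioo (0:ℝ) 1 → 1 < H → 1 < R → 0 ≤ a → a < b → 0 < r →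
        Continuous g → (∀ x, 0 ≤ g x) → (∀ x, g x ≤ H) →
        (∀ x y, |g x - g y| ≤ H * ‖x - y‖ ^ γ) →
        (∫ x in {x : EuclideanSpace ℝ (Fin d) | R + a*r < ‖x‖ ∧ ‖x‖ < R + b*r}, g x) = 1 →
        1 ≤ sSup (g '' {x : EuclideanSpace ℝ (Fin d) | R + a*r < ‖x‖ ∧ ‖x‖ < R + b*r}) →
        N * (min ((4*H) ^ (-(1/γ))) ((b-a)*r)) ^ d ≤
          ∫ x in {x : EuclideanSpace ℝ (Fin d) | R + a*r < ‖x‖ ∧ ‖x‖ < R + b*r},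
            (g x) ^ lam :=
  stmt6_general lam hlam d
end
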